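/- arXiv:2602.19751 — 2 statements merged into one kernel-verified Lean document; each statement's English description precedes it below -/
import Mathlib

section
/- Let θ > 0 and 0 < L. Suppose G : [L,∞) → ℝ is differentiable, G(s₀) > 0 for some s₀ ≥ L, and θ·G(t) ≥ G'(t)·t whenever t ∈ [L, s₀] and G(t) > 0. Then G(s) ≥ G(s₀)·(s/s₀)^θ ≥ G(s₀)·(L/s₀)^θ > 0 for all s ∈ [L, s₀]. -/
theorem stmt6 (θ L s₀ : ℝ) (G G' : ℝ → ℝ) (hθ : 0 < θ) (hL : 0 < L) (hs₀ : L ≤ s₀)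
    (hdiff : ∀ t ∈ Set.Icc L s₀, HasDerivAt G (G' t) t)
    (hAR : ∀ t ∈ Set.Icc L s₀, 0 < G t → G' t * t ≤ θ * G t)
    (hGs₀ : 0 < G s₀) :
    ∀ s ∈ Set.Icc L s₀,
      G s₀ * (s / s₀) ^ θ ≤ G s ∧
      G s₀ * (L / s₀) ^ θ ≤ G s₀ * (s / s₀) ^ θ ∧
      0 < G s₀ * (L / s₀) ^ θ := by
  have hs₀pos : 0 < s₀ := hL.trans_le hs₀
  -- key comparison lemma: if G > 0 on [a, s₀], then the bound holds on [a, s₀]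
  have key : ∀ a ∈ Set.Icc L s₀, (∀ t ∈ Set.Icc a s₀, 0 < G t) →
      ∀ s ∈ Set.Icc a s₀, G s₀ * (s / s₀) ^ θ ≤ G s := by
    intro a ha hpos
    set F : ℝ → ℝ := fun t => G t / t ^ θ with hF
    have hderiv : ∀ t ∈ Set.Icc a s₀,
        HasDerivAt F ((G' t * t ^ θ - G t * (θ * t ^ (θ - 1))) / (t ^ θ) ^ 2) t := by
      intro t ht
      have ht0 : 0 < t := lt_of_lt_of_le hL (le_trans ha.1 ht.1)
      have h1 := hdiff t ⟨le_trans ha.1 ht.1, ht.2⟩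
      have h2 : HasDerivAt (fun x : ℝ => x ^ θ) (θ * t ^ (θ - 1)) t :=
        Real.hasDerivAt_rpow_const (Or.inl ht0.ne')
      have hne : t ^ θ ≠ 0 := (Real.rpow_pos_of_pos ht0 θ).ne'
      exact h1.div h2 hne
    have hanti : AntitoneOn F (Set.Icc a s₀) := by
      apply antitoneOn_of_deriv_nonpos (convex_Icc a s₀)
      · exact fun t ht => (hderiv t ht).continuousAt.continuousWithinAt
      · intro t ht
        rw [interior_Icc] at ht
        exact ((hderiv t (Set.Ioo_subset_Icc_self ht)).differentiableAt).differentiableWithinAt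
      · intro t ht
        rw [interior_Icc] at ht
        have ht' := Set.Ioo_subset_Icc_self ht
        rw [(hderiv t ht').deriv]
        have ht0 : 0 < t := lt_of_lt_of_le hL (le_trans ha.1 ht'.1)
        have hpt := hpos t ht'
        have hineq := hAR t ⟨le_trans ha.1 ht'.1, ht'.2⟩ hpt
        have hsplit : t ^ (θ - 1) * t = t ^ θ := by
          rw [Real.rpow_sub_one ht0.ne']
          exact div_mul_cancel₀ _ ht0.ne'
        have hnum : G' t * t ^ θ - G t * (θ * t ^ (θ - 1)) =
            t ^ (θ - 1) * (G' t * t - θ * G t) := by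
          rw [← hsplit]; ring
        apply div_nonpos_of_nonpos_of_nonneg
        · rw [hnum]
          exact mul_nonpos_of_nonneg_of_nonpos (Real.rpow_nonneg ht0.le _)
            (by linarith)
        · exact sq_nonneg _
    intro s hs
    have hFs := hanti hs ⟨le_trans hs.1 hs.2, le_refl s₀⟩ hs.2
    -- hFs : G s₀ / s₀ ^ θ ≤ G s / s ^ θ
    have hs0 : 0 < s := lt_of_lt_of_le hL (le_trans ha.1 hs.1)
    have hspow : (0:ℝ) < s ^ θ := Real.rpow_pos_of_pos hs0 θ
    have hdivp : (s / s₀) ^ θ = s ^ θ / s₀ ^ θ := Real.div_rpow hs0.le hs₀pos.le θ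
    calc G s₀ * (s / s₀) ^ θ = (G s₀ / s₀ ^ θ) * s ^ θ := by
          rw [hdivp]; ring
      _ ≤ (G s / s ^ θ) * s ^ θ := mul_le_mul_of_nonneg_right hFs hspow.le
      _ = G s := div_mul_cancel₀ _ hspow.ne'
  -- continuous induction for positivity
  set S : Set ℝ := {a | a ∈ Set.Icc L s₀ ∧ ∀ t ∈ Set.Icc a s₀, 0 < G t} with hS
  have hs₀S : s₀ ∈ S := by
    refine ⟨⟨hs₀, le_refl _⟩, fun t ht => ?_⟩
    have : t = s₀ := le_antisymm ht.2 ht.1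
    rwa [this]
  have hSne : S.Nonempty := ⟨s₀, hs₀S⟩
  have hbdd : BddBelow S := ⟨L, fun a ha => ha.1.1⟩
  set m := sInf S with hm
  have hmL : L ≤ m := le_csInf hSne (fun a ha => ha.1.1)
  have hms₀ : m ≤ s₀ := csInf_le hbdd hs₀S
  have claim1 : ∀ t ∈ Set.Ioc m s₀, 0 < G t := by
    intro t ht
    obtain ⟨a, haS, hat⟩ := exists_lt_of_csInf_lt hSne ht.1
    exact haS.2 t ⟨hat.le, ht.2⟩
  have claim2 : 0 < G m := by
    rcases eq_or_lt_of_le hms₀ with heq | hlt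
    · rw [heq]; exact hGs₀
    · have hε : 0 < G s₀ * (m / s₀) ^ θ :=
        mul_pos hGs₀ (Real.rpow_pos_of_pos (div_pos (hL.trans_le hmL) hs₀pos) θ)
      have hlower : ∀ t ∈ Set.Ioc m s₀, G s₀ * (m / s₀) ^ θ ≤ G t := by
        intro t ht
        have hbound := key t ⟨le_trans hmL ht.1.le, ht.2⟩
          (fun u hu => claim1 u ⟨lt_of_lt_of_le ht.1 hu.1, hu.2⟩) t ⟨le_refl t, ht.2⟩
        refine le_trans ?_ hbound
        apply mul_le_mul_of_nonneg_left _ hGs₀.le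
        exact Real.rpow_le_rpow (div_nonneg (hL.trans_le hmL).le hs₀pos.le)
          (div_le_div_of_nonneg_right ht.1.le hs₀pos.le) hθ.le
      have hcont : ContinuousWithinAt G (Set.Ioc m s₀) m :=
        (hdiff m ⟨hmL, hms₀⟩).continuousAt.continuousWithinAt
      have hne : (nhdsWithin m (Set.Ioc m s₀)).NeBot := by
        rw [← mem_closure_iff_nhdsWithin_neBot, closure_Ioc hlt.ne]
        exact ⟨le_refl m, hms₀⟩
      exact lt_of_lt_of_le hε
        (ge_of_tendsto hcont (eventually_mem_nhdsWithin.mono (fun t ht => hlower t ht)))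
  have claim3 : m = L := by
    by_contra hne
    have hLm : L < m := lt_of_le_of_ne hmL (Ne.symm hne)
    have hcont : ContinuousAt G m := (hdiff m ⟨hmL, hms₀⟩).continuousAt
    have hev : ∀ᶠ t in nhds m, 0 < G t := hcont.eventually (eventually_gt_nhds claim2)
    obtain ⟨δ, hδ, hball⟩ := Metric.eventually_nhds_iff.mp hev
    set a := max L (m - δ / 2) with ha
    have haL : L ≤ a := le_max_left _ _
    have ham : a < m := max_lt hLm (by linarith)
    have haS : a ∈ S := by
      refine ⟨⟨haL, le_trans ham.le hms₀⟩, fun t ht => ?_⟩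
      rcases lt_or_ge m t with h | h
      · exact claim1 t ⟨h, ht.2⟩
      · apply hball
        rw [Real.dist_eq, abs_of_nonpos (by linarith)]
        have : m - δ / 2 ≤ a := le_max_right _ _
        have := ht.1
        simp only [ha] at *
        linarith
    exact absurd (csInf_le hbdd haS) (not_le.mpr ham)
  have hposL : ∀ t ∈ Set.Icc L s₀, 0 < G t := by
    intro t ht
    rcases eq_or_lt_of_le ht.1 with heq | hlt
    · rw [← heq]; rw [claim3] at claim2; exact claim2
    · exact claim1 t ⟨claim3 ▸ hlt, ht.2⟩
  intro s hs
  refine ⟨key L ⟨le_refl L, hs₀⟩ hposL s hs, ?_, ?_⟩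
  · apply mul_le_mul_of_nonneg_left _ hGs₀.le
    exact Real.rpow_le_rpow (div_nonneg hL.le hs₀pos.le)
      (div_le_div_of_nonneg_right hs.1 hs₀pos.le) hθ.le
  · exact mul_pos hGs₀ (Real.rpow_pos_of_pos (div_pos hL hs₀pos) θ)
end

section
/- Let a < b be reals, D = [a,b] × [0,1], and let F = (F₁, F₂) : D → ℝ² be continuous with F₁(a, τ) = a and F₁(b, τ) = b for all τ ∈ [0,1], F₂(μ, 0) = 0 for all μ ∈ [a,b], and F₂(μ, 1) < 0 for all μ ∈ [a,b]. Then for every μ₀ ∈ (a,b) and every ε with 0 < ε < −max_{μ ∈ [a,b]} F₂(μ,1), there exists a point z ∈ D with F(z) = (μ₀, −ε). -/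
/-!
Suppose `F` misses `(μ₀, -ε)` and put `g = (F₁ - μ₀) + (F₂ + ε) i`, a nonvanishing continuous
map on the rectangle. Since the rectangle is simply connected, `g = exp L` for a continuous `L`,
and `Im L` is a continuous argument of `g`. On each edge `g` stays in a half plane (upper on the
bottom, right on the right edge, lower on the top, left on the left edge), so the change of
`Im L` along that edge is a difference of principal arguments; adding the four changes gives the
winding number `-1` of `g` around the boundary, whereas a single-valued `L` gives `0`.
-/

open Complex Set
open scoped Real

theorem Convex.exists_continuousOn_exp_eq {E : Type*} [NormedAddCommGroup E] [NormedSpace ℝ E]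
    {s : Set E} (hs : Convex ℝ s) {g : E → ℂ} (hg : ContinuousOn g s) (hg0 : ∀ x ∈ s, g x ≠ 0) :
    ∃ L : E → ℂ, ContinuousOn L s ∧ ∀ x ∈ s, exp (L x) = g x := by
  rcases s.eq_empty_or_nonempty with rfl | ⟨x₀, hx₀⟩
  · exact ⟨0, continuousOn_empty _, fun _ => False.elim⟩
  have := hs.contractibleSpace ⟨x₀, hx₀⟩
  have := hs.locallyPathConnectedSpace
  obtain ⟨Λ, ⟨-, hΛ⟩, -⟩ := isCoveringMapOn_exp.existsUnique_continuousMap_lifts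
    ⟨s.domRestrict g, hg.domRestrict⟩ (a₀ := ⟨x₀, hx₀⟩) (exp_log (hg0 x₀ hx₀))
    fun x => hg0 x x.2
  classical
  refine ⟨fun x => if hx : x ∈ s then Λ ⟨x, hx⟩ else 0, ?_, fun x hx => ?_⟩
  · rw [continuousOn_iff_continuous_domRestrict]
    convert Λ.continuous using 1
    ext x
    simp
  · simpa [hx] using congrFun hΛ ⟨x, hx⟩

theorem IsPreconnected.im_sub_eq_arg_sub {α : Type*} [TopologicalSpace α] {S : Set α}
    (hS : IsPreconnected S) {L : α → ℂ} {g : α → ℂ} (hL : ContinuousOn L S)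
    (hLg : ∀ x ∈ S, exp (L x) = g x) (hslit : ∀ x ∈ S, g x ∈ slitPlane) {x y : α} (hx : x ∈ S)
    (hy : y ∈ S) : (L x).im - (L y).im = arg (g x) - arg (g y) := by
  have hdisc : IsDiscrete (AddSubgroup.zmultiples (2 * π * I) : Set ℂ) :=
    isDiscrete_iff_discreteTopology.mpr (NormedSpace.discreteTopology_zmultiples _)
  have hcont : ContinuousOn (fun x => L x - log (g x)) S :=
    hL.sub ((hL.cexp.congr fun x hx => (hLg x hx).symm).clog hslit)
  have hmaps : MapsTo (fun x => L x - log (g x)) S (AddSubgroup.zmultiples (2 * π * I)) := by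
    intro x hx
    have hg0 : g x ≠ 0 := slitPlane_ne_zero (hslit x hx)
    obtain ⟨n, hn⟩ := exp_eq_one_iff.mp (show exp (L x - log (g x)) = 1 by
      rw [exp_sub, exp_log hg0, hLg x hx, div_self hg0])
    exact ⟨n, by simp [hn]⟩
  have := congrArg im (hS.constant_of_mapsTo hdisc hcont hmaps hx hy)
  simp only [sub_im, log_im] at this
  linarith

theorem exists_eq_zero_of_rectangle_boundary_signs {a b c d : ℝ} (hab : a ≤ b) (hcd : c ≤ d)
    {g : ℝ × ℝ → ℂ} (hg : ContinuousOn g (Icc a b ×ˢ Icc c d))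
    (hbot : ∀ x ∈ Icc a b, 0 < (g (x, c)).im) (htop : ∀ x ∈ Icc a b, (g (x, d)).im < 0)
    (hleft : ∀ y ∈ Icc c d, (g (a, y)).re < 0) (hright : ∀ y ∈ Icc c d, 0 < (g (b, y)).re) :
    ∃ p ∈ Icc a b ×ˢ Icc c d, g p = 0 := by
  by_contra! hg0
  obtain ⟨L, hL, hLg⟩ :=
    ((convex_Icc a b).prod (convex_Icc c d)).exists_continuousOn_exp_eq hg hg0
  have ha : a ∈ Icc a b := left_mem_Icc.mpr hab
  have hb : b ∈ Icc a b := right_mem_Icc.mpr hab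
  have hc : c ∈ Icc c d := left_mem_Icc.mpr hcd
  have hd : d ∈ Icc c d := right_mem_Icc.mpr hcd
  have hedge : ∀ {S : Set (ℝ × ℝ)}, S ⊆ Icc a b ×ˢ Icc c d →
      ContinuousOn L S ∧ ∀ p ∈ S, exp (L p) = g p :=
    fun hS => ⟨hL.mono hS, fun p hp => hLg p (hS hp)⟩
  have hbotS := hedge (prod_mono subset_rfl (singleton_subset_iff.mpr hc))
  have htopS := hedge (prod_mono subset_rfl (singleton_subset_iff.mpr hd))
  have hleftS := hedge (prod_mono (singleton_subset_iff.mpr ha) subset_rfl)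
  have hrightS := hedge (prod_mono (singleton_subset_iff.mpr hb) subset_rfl)
  have bottom := (isPreconnected_Icc.prod isPreconnected_singleton).im_sub_eq_arg_sub hbotS.1
    hbotS.2 (by rintro ⟨x, y⟩ ⟨hx, rfl⟩; exact mem_slitPlane_iff.mpr (Or.inr (hbot x hx).ne'))
    (mk_mem_prod hb (mem_singleton c)) (mk_mem_prod ha (mem_singleton c))
  have top := (isPreconnected_Icc.prod isPreconnected_singleton).im_sub_eq_arg_sub htopS.1
    htopS.2 (by rintro ⟨x, y⟩ ⟨hx, rfl⟩; exact mem_slitPlane_iff.mpr (Or.inr (htop x hx).ne))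
    (mk_mem_prod hb (mem_singleton d)) (mk_mem_prod ha (mem_singleton d))
  have right := (isPreconnected_singleton.prod isPreconnected_Icc).im_sub_eq_arg_sub hrightS.1
    hrightS.2 (by rintro ⟨x, y⟩ ⟨rfl, hy⟩; exact mem_slitPlane_iff.mpr (Or.inl (hright y hy)))
    (mk_mem_prod (mem_singleton b) hd) (mk_mem_prod (mem_singleton b) hc)
  -- on the left edge `g` crosses the cut of `arg`, so follow `-g = exp (L + π I)` instead
  have left := (isPreconnected_singleton.prod isPreconnected_Icc).im_sub_eq_arg_sub
    (L := fun p => L p + π * I) (g := fun p => -g p) (hleftS.1.add continuousOn_const)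
    (fun p hp => by rw [exp_add, exp_pi_mul_I, hleftS.2 p hp, mul_neg_one])
    (by rintro ⟨x, y⟩ ⟨rfl, hy⟩; exact mem_slitPlane_iff.mpr (Or.inl (by simpa using hleft y hy)))
    (mk_mem_prod (mem_singleton a) hd) (mk_mem_prod (mem_singleton a) hc)
  simp only [add_im, mul_im, ofReal_re, I_im, ofReal_im, I_re] at left
  rw [arg_neg_eq_arg_add_pi_of_im_neg (htop a ha), arg_neg_eq_arg_sub_pi_of_im_pos (hbot a ha)]
    at left
  linarith [Real.pi_pos]

theorem stmt17_general (a b : ℝ) (F : ℝ × ℝ → ℝ × ℝ)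
    (hF : ContinuousOn F (Set.Icc a b ×ˢ Set.Icc 0 1))
    (h1a : ∀ τ ∈ Set.Icc (0 : ℝ) 1, (F (a, τ)).1 = a)
    (h1b : ∀ τ ∈ Set.Icc (0 : ℝ) 1, (F (b, τ)).1 = b)
    (h20 : ∀ μ ∈ Set.Icc a b, (F (μ, 0)).2 = 0)
    (μ₀ : ℝ) (hμ₀ : μ₀ ∈ Set.Ioo a b) (ε : ℝ) (hε : 0 < ε)
    (hε2 : ε < - sSup ((fun μ => (F (μ, 1)).2) '' Set.Icc a b)) :
    ∃ z ∈ Set.Icc a b ×ˢ Set.Icc (0 : ℝ) 1, F z = (μ₀, -ε) := by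
  have htop : ∀ μ ∈ Icc a b, (F (μ, 1)).2 + ε < 0 := by
    have hcont : ContinuousOn (fun μ => (F (μ, 1)).2) (Icc a b) :=
      continuous_snd.comp_continuousOn <| hF.comp (Continuous.continuousOn (by fun_prop))
        fun μ hμ => mk_mem_prod hμ (right_mem_Icc.mpr zero_le_one)
    intro μ hμ
    linarith [le_csSup (isCompact_Icc.bddAbove_image hcont) (mem_image_of_mem _ hμ)]
  obtain ⟨z, hz, hz0⟩ := exists_eq_zero_of_rectangle_boundary_signs (hμ₀.1.trans hμ₀.2).le
    zero_le_one (g := fun p => equivRealProdCLM.symm (F p - (μ₀, -ε)))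
    (equivRealProdCLM.symm.continuous.comp_continuousOn (hF.sub continuousOn_const))
    (fun μ hμ => by simp [h20 μ hμ, hε]) (fun μ hμ => by simpa using htop μ hμ)
    (fun τ hτ => by simpa [h1a τ hτ] using hμ₀.1) (fun τ hτ => by simpa [h1b τ hτ] using hμ₀.2)
  exact ⟨z, hz, sub_eq_zero.mp (equivRealProdCLM.symm.injective (by simpa using hz0))⟩

theorem stmt17 (a b : ℝ) (hab : a < b) (F : ℝ × ℝ → ℝ × ℝ)
    (hF : ContinuousOn F (Set.Icc a b ×ˢ Set.Icc 0 1))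
    (h1a : ∀ τ ∈ Set.Icc (0 : ℝ) 1, (F (a, τ)).1 = a)
    (h1b : ∀ τ ∈ Set.Icc (0 : ℝ) 1, (F (b, τ)).1 = b)
    (h20 : ∀ μ ∈ Set.Icc a b, (F (μ, 0)).2 = 0)
    (h21 : ∀ μ ∈ Set.Icc a b, (F (μ, 1)).2 < 0)
    (μ₀ : ℝ) (hμ₀ : μ₀ ∈ Set.Ioo a b) (ε : ℝ) (hε : 0 < ε)
    (hε2 : ε < - sSup ((fun μ => (F (μ, 1)).2) '' Set.Icc a b)) :
    ∃ z ∈ Set.Icc a b ×ˢ Set.Icc (0 : ℝ) 1, F z = (μ₀, -ε) :=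
  stmt17_general a b F hF h1a h1b h20 μ₀ hμ₀ ε hε hε2
end
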